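/- arXiv:2501.05968 — 6 statements merged into one kernel-verified Lean document; each statement's English description precedes it below -/
import Mathlib

section
/- Let P = u₁u₂…u_n be an oriented path and let v₁,…,v_k be vertices not on P, each adjacent (in the ambient oriented graph) to every vertex u_j of P. If n ≥ k + 2, then there exists an oriented path P′ obtained from P by inserting each v_i between some consecutive pair u_{a_i}, u_{a_i+1} (with all a_i distinct) such that σ⁺(P′) ≥ σ⁺(P). -/
/-- A digraph given by the arc relation `A` is an oriented graph: no loops and at most
one arc between any two vertices. -/
def IsOriented {V : Type*} (A : V → V → Prop) : Prop :=
  ∀ u v, A u v → u ≠ v ∧ ¬ A v u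

/-- The degree of `v` in the underlying graph of the digraph `A`. -/
noncomputable def deg {V : Type*} [Fintype V] (A : V → V → Prop) (v : V) : ℕ :=
  Nat.card {u : V // A v u ∨ A u v}

/-- `e` lists the vertices of a Hamilton oriented cycle of the digraph `A`:
consecutive vertices are joined by an arc in one of the two directions. -/
def IsHamOrientedCycle {V : Type*} [Fintype V] (A : V → V → Prop)
    (e : ZMod (Fintype.card V) ≃ V) : Prop :=
  ∀ i, A (e i) (e (i + 1)) ∨ A (e (i + 1)) (e i)

/-- The number of forward arcs of the oriented cycle listed by `e`. -/
noncomputable def sigmaPlus {V : Type*} [Fintype V] (A : V → V → Prop)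
    (e : ZMod (Fintype.card V) ≃ V) : ℕ :=
  Nat.card {i : ZMod (Fintype.card V) // A (e i) (e (i + 1))}

/-- The number of backward arcs of the oriented cycle listed by `e`. -/
noncomputable def sigmaMinus {V : Type*} [Fintype V] (A : V → V → Prop)
    (e : ZMod (Fintype.card V) ≃ V) : ℕ :=
  Nat.card {i : ZMod (Fintype.card V) // A (e (i + 1)) (e i)}

/-- `σ_max` of the oriented cycle listed by `e`. -/
noncomputable def sigmaMax {V : Type*} [Fintype V] (A : V → V → Prop)
    (e : ZMod (Fintype.card V) ≃ V) : ℕ :=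
  max (sigmaPlus A e) (sigmaMinus A e)

/-- The number of forward arcs of the oriented path listed by `l`. -/
noncomputable def listForward {V : Type*} (A : V → V → Prop) (l : List V) : ℕ :=
  (l.zip l.tail).countP fun p => @decide (A p.1 p.2) (Classical.propDecidable _)

/-! If some vertex `v` still to be placed satisfies `v → b` for the next gap `ab`, put it there:
the arcs `a–v`, `v → b` contain at least as many forward arcs as `ab`. Otherwise `b` dominates
every remaining vertex, so whichever vertex is later placed right after `b` creates a forward
arc; this credit pays either for one lossy insertion or, when there is a spare gap, for leaving
`ab` empty. -/

section GapInsertion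

variable {V : Type*} {A : V → V → Prop}

section listForward

theorem listForward_cons_cons_of_rel {a b : V} (h : A a b) (l : List V) :
    listForward A (a :: b :: l) = listForward A (b :: l) + 1 := by
  simp [listForward, h]

theorem listForward_cons_cons_of_not_rel {a b : V} (h : ¬ A a b) (l : List V) :
    listForward A (a :: b :: l) = listForward A (b :: l) := by
  simp [listForward, h]

variable (A) in
theorem listForward_cons_cons_le (a b : V) (l : List V) :
    listForward A (a :: b :: l) ≤ listForward A (b :: l) + 1 := by
  by_cases h : A a b
  · exact (listForward_cons_cons_of_rel h l).le
  · rw [listForward_cons_cons_of_not_rel h]; omega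

variable (A) in
theorem listForward_le_cons_cons (a b : V) (l : List V) :
    listForward A (b :: l) ≤ listForward A (a :: b :: l) := by
  by_cases h : A a b
  · rw [listForward_cons_cons_of_rel h]; omega
  · rw [listForward_cons_cons_of_not_rel h]

theorem listForward_cons_cons_mono (a : V) {b : V} {l l' : List V}
    (h : listForward A (b :: l) ≤ listForward A (b :: l')) :
    listForward A (a :: b :: l) ≤ listForward A (a :: b :: l') := by
  by_cases hab : A a b
  · rw [listForward_cons_cons_of_rel hab, listForward_cons_cons_of_rel hab]; omega
  · rwa [listForward_cons_cons_of_not_rel hab, listForward_cons_cons_of_not_rel hab]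

end listForward

inductive IsGapInsertion : List V → List V → List V → Prop
  | singleton (a : V) : IsGapInsertion [a] [] [a]
  | skip (a : V) {b : V} {t vs M : List V} :
      IsGapInsertion (b :: t) vs (b :: M) → IsGapInsertion (a :: b :: t) vs (a :: b :: M)
  | insert (a v : V) {b : V} {t vs ws M : List V} :
      IsGapInsertion (b :: t) ws (b :: M) → vs.Perm (v :: ws) →
        IsGapInsertion (a :: b :: t) vs (a :: v :: b :: M)

namespace IsGapInsertion

variable {l vs l' : List V}

theorem getLast?_eq (h : IsGapInsertion l vs l') : l'.getLast? = l.getLast? := by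
  induction h with
  | singleton => rfl
  | skip _ _ ih => simpa only [List.getLast?_cons_cons] using ih
  | insert _ _ _ _ ih => simpa only [List.getLast?_cons_cons] using ih

theorem sublist (h : IsGapInsertion l vs l') : l.Sublist l' := by
  induction h with
  | singleton => rfl
  | skip a _ ih => exact ih.cons_cons a
  | insert a v _ _ ih => exact (ih.cons v).cons_cons a

theorem perm (h : IsGapInsertion l vs l') : l'.Perm (l ++ vs) := by
  induction h with
  | singleton => rfl
  | skip a _ ih => exact ih.cons a
  | @insert a v b t vs ws M _ hvs ih =>
    refine List.Perm.cons a ?_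
    calc (v :: b :: M).Perm (v :: (b :: t ++ ws)) := ih.cons v
      List.Perm _ (b :: t ++ v :: ws) := List.perm_middle.symm
      List.Perm _ (b :: t ++ vs) := hvs.symm.append_left _

theorem mem_or_mem_of_mem_zip_tail (h : IsGapInsertion l vs l') :
    ∀ p ∈ l'.zip l'.tail, p.1 ∈ l ∨ p.2 ∈ l := by
  induction h with
  | singleton => simp
  | skip a _ ih =>
    intro p hp
    rw [List.tail_cons, List.zip_cons_cons, List.mem_cons] at hp
    rcases hp with rfl | hp
    · simp
    · exact (ih p hp).imp (List.mem_cons_of_mem a) (List.mem_cons_of_mem a)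
  | insert a v _ _ ih =>
    intro p hp
    rw [List.tail_cons, List.zip_cons_cons, List.mem_cons, List.zip_cons_cons, List.mem_cons] at hp
    rcases hp with rfl | rfl | hp
    · simp
    · simp
    · exact (ih p hp).imp (List.mem_cons_of_mem a) (List.mem_cons_of_mem a)

theorem isChain (h : IsGapInsertion l vs l') (hl : l.IsChain fun u v => A u v ∨ A v u)
    (hadj : ∀ v ∈ vs, ∀ u ∈ l, A v u ∨ A u v) :
    l'.IsChain fun u v => A u v ∨ A v u := by
  induction h with
  | singleton => exact List.isChain_singleton _
  | skip a _ ih =>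
    have hab := (List.isChain_cons_cons.mp hl).1
    exact .cons_cons hab
      (ih hl.tail fun v hv u hu => hadj v hv u (List.mem_cons_of_mem a hu))
  | @insert a v b t vs ws M _ hvs ih =>
    have hv : v ∈ vs := hvs.symm.subset List.mem_cons_self
    have htail := ih hl.tail fun w hw u hu =>
      hadj w (hvs.symm.subset (List.mem_cons_of_mem v hw)) u (List.mem_cons_of_mem a hu)
    exact .cons_cons (hadj v hv a (by simp)).symm (.cons_cons (hadj v hv b (by simp)) htail)

end IsGapInsertion

section insertion

variable [DecidableEq V] {a : V} {t vs : List V}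

theorem exists_gapInsertion_listForward_le_add_one (hlen : vs.length ≤ t.length)
    (hadj : ∀ v ∈ vs, ∀ u ∈ a :: t, A v u ∨ A u v) :
    ∃ M, IsGapInsertion (a :: t) vs (a :: M) ∧
      listForward A (a :: t) ≤ listForward A (a :: M) + 1 ∧
      ((∀ v ∈ vs, A a v) → listForward A (a :: t) ≤ listForward A (a :: M)) := by
  induction t generalizing a vs with
  | nil =>
    obtain rfl : vs = [] := List.eq_nil_of_length_eq_zero (Nat.le_zero.mp hlen)
    exact ⟨[], .singleton a, by omega, fun _ => le_rfl⟩
  | cons b t ih =>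
    have hadjT : ∀ v ∈ vs, ∀ u ∈ b :: t, A v u ∨ A u v :=
      fun v hv u hu => hadj v hv u (List.mem_cons_of_mem a hu)
    have hloss := listForward_cons_cons_le A a b t
    by_cases hvb : ∃ v ∈ vs, A v b
    · obtain ⟨v, hv, hvb⟩ := hvb
      obtain ⟨M, hM, hM1, -⟩ := ih (vs := vs.erase v)
        (by rw [List.length_erase_of_mem hv]; simp only [List.length_cons] at hlen; omega)
        fun w hw => hadjT w (List.mem_of_mem_erase hw)
      refine ⟨v :: b :: M, hM.insert a v (List.perm_cons_erase hv), ?_, fun hav => ?_⟩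
      · have := listForward_le_cons_cons A a v (b :: M)
        rw [listForward_cons_cons_of_rel hvb] at this
        omega
      · rw [listForward_cons_cons_of_rel (hav v hv), listForward_cons_cons_of_rel hvb]
        omega
    · have hbv : ∀ v ∈ vs, A b v := fun v hv =>
        (hadj v hv b (by simp)).resolve_left fun h => hvb ⟨v, hv, h⟩
      rcases vs with _ | ⟨v, ws⟩
      · obtain ⟨M, hM, -, hM0⟩ := ih (vs := []) (by simp) (by simp)
        have hkeep := listForward_cons_cons_mono a (hM0 (by simp))
        exact ⟨b :: M, hM.skip a, by omega, fun _ => hkeep⟩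
      · simp only [List.length_cons] at hlen
        obtain ⟨M, hM, -, hM0⟩ := ih (vs := ws) (by omega)
          fun w hw => hadjT w (List.mem_cons_of_mem v hw)
        have hM0 := hM0 fun w hw => hbv w (List.mem_cons_of_mem v hw)
        have hskip := listForward_le_cons_cons A v b M
        refine ⟨v :: b :: M, hM.insert a v (List.Perm.refl _), ?_, fun hav => ?_⟩
        · have := listForward_le_cons_cons A a v (b :: M)
          omega
        · rw [listForward_cons_cons_of_rel (hav v List.mem_cons_self)]
          omega

theorem exists_gapInsertion_listForward_le (hlen : vs.length + 1 ≤ t.length)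
    (hadj : ∀ v ∈ vs, ∀ u ∈ a :: t, A v u ∨ A u v) :
    ∃ M, IsGapInsertion (a :: t) vs (a :: M) ∧
      listForward A (a :: t) ≤ listForward A (a :: M) := by
  induction t generalizing a vs with
  | nil => simp at hlen
  | cons b t ih =>
    have hadjT : ∀ v ∈ vs, ∀ u ∈ b :: t, A v u ∨ A u v :=
      fun v hv u hu => hadj v hv u (List.mem_cons_of_mem a hu)
    have hloss := listForward_cons_cons_le A a b t
    by_cases hvb : ∃ v ∈ vs, A v b
    · obtain ⟨v, hv, hvb⟩ := hvb
      obtain ⟨M, hM, hM0⟩ := ih (vs := vs.erase v)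
        (by
          have := List.length_pos_of_mem hv
          rw [List.length_erase_of_mem hv]
          simp only [List.length_cons] at hlen
          omega)
        fun w hw => hadjT w (List.mem_of_mem_erase hw)
      refine ⟨v :: b :: M, hM.insert a v (List.perm_cons_erase hv), ?_⟩
      have := listForward_le_cons_cons A a v (b :: M)
      rw [listForward_cons_cons_of_rel hvb] at this
      omega
    · have hbv : ∀ v ∈ vs, A b v := fun v hv =>
        (hadj v hv b (by simp)).resolve_left fun h => hvb ⟨v, hv, h⟩
      simp only [List.length_cons] at hlen
      obtain ⟨M, hM, -, hM0⟩ := exists_gapInsertion_listForward_le_add_one (by omega) hadjT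
      exact ⟨b :: M, hM.skip a, listForward_cons_cons_mono a (hM0 hbv)⟩

end insertion

end GapInsertion

theorem stmt4_general {V : Type*} (A : V → V → Prop)
    (l : List V) (hchain : l.Chain' fun u v => A u v ∨ A v u)
    (vs : List V) (hdisj : ∀ v ∈ vs, v ∉ l)
    (hadj : ∀ v ∈ vs, ∀ u ∈ l, A v u ∨ A u v)
    (hlen : vs.length + 2 ≤ l.length) :
    ∃ l' : List V, (l'.Chain' fun u v => A u v ∨ A v u) ∧
      l.Sublist l' ∧ l'.Perm (l ++ vs) ∧
      l'.head? = l.head? ∧ l'.getLast? = l.getLast? ∧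
      (∀ p ∈ l'.zip l'.tail, ¬ (p.1 ∈ vs ∧ p.2 ∈ vs)) ∧
      listForward A l ≤ listForward A l' := by
  classical
  obtain ⟨a, t, rfl⟩ := List.exists_cons_of_length_pos (by omega : 0 < l.length)
  obtain ⟨M, hM, hfwd⟩ := exists_gapInsertion_listForward_le (by simpa using hlen) hadj
  refine ⟨a :: M, hM.isChain hchain hadj, hM.sublist, hM.perm, rfl, hM.getLast?_eq, ?_, hfwd⟩
  rintro p hp ⟨hp₁, hp₂⟩
  rcases hM.mem_or_mem_of_mem_zip_tail p hp with h | h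
  · exact hdisj _ hp₁ h
  · exact hdisj _ hp₂ h

/-- given an oriented path `l` (in an oriented graph `A`) on `n` vertices
and `k ≤ n - 2` further vertices `vs`, each adjacent to every vertex of `l`, one can
insert each vertex of `vs` into a distinct gap between consecutive vertices of `l`
(keeping the endpoints and the order of `l`, and placing no two inserted vertices
consecutively) so that the number of forward arcs does not decrease. -/
theorem stmt4 {V : Type*} (A : V → V → Prop) (hA : IsOriented A)
    (l : List V) (hchain : l.Chain' fun u v => A u v ∨ A v u) (hnd : l.Nodup)
    (vs : List V) (hvsnd : vs.Nodup) (hdisj : ∀ v ∈ vs, v ∉ l)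
    (hadj : ∀ v ∈ vs, ∀ u ∈ l, A v u ∨ A u v)
    (hlen : vs.length + 2 ≤ l.length) :
    ∃ l' : List V, (l'.Chain' fun u v => A u v ∨ A v u) ∧
      l.Sublist l' ∧ l'.Perm (l ++ vs) ∧
      l'.head? = l.head? ∧ l'.getLast? = l.getLast? ∧
      (∀ p ∈ l'.zip l'.tail, ¬ (p.1 ∈ vs ∧ p.2 ∈ vs)) ∧
      listForward A l ≤ listForward A l' :=
  stmt4_general A l hchain vs hdisj hadj hlen
end

section
/- For n and δ integers with δ ≥ 2 and n > 2δ, there exists an oriented graph D on n vertices with minimum degree δ that satisfies the Ore-type condition (d(u) + d(v) ≥ n for all non-adjacent u, v), such that every Hamilton oriented cycle C of D satisfies σ_max(C) ≤ n − δ. -/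
open Finset

lemma deg_eq_card {V : Type*} [Fintype V] {A : V → V → Prop} {v : V} (s : Finset V)
    (hs : ∀ u, A v u ∨ A u v ↔ u ∈ s) : deg A v = #s := by
  rw [deg, Nat.card_congr (Equiv.subtypeEquivRight hs), Nat.card_eq_finsetCard]

section OrientedCycle

variable {V : Type*} [Fintype V] {A : V → V → Prop} {e : ZMod (Fintype.card V) ≃ V}

lemma sigmaPlus_add_sigmaMinus (hA : IsOriented A) (he : IsHamOrientedCycle A e) :
    sigmaPlus A e + sigmaMinus A e = Fintype.card V := by
  classical
  have : Finite (ZMod (Fintype.card V)) := Finite.of_equiv V e.symm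
  have hminus : sigmaMinus A e = Nat.card {i // ¬ A (e i) (e (i + 1))} :=
    Nat.card_congr <| Equiv.subtypeEquivRight fun i =>
      ⟨fun h hf => (hA _ _ h).2 hf, (he i).resolve_left⟩
  rw [sigmaPlus, hminus, ← Nat.card_sum,
    Nat.card_congr (Equiv.sumCompl fun i => A (e i) (e (i + 1))), Nat.card_congr e,
    Nat.card_eq_fintype_card]

variable (S : Finset V) (hS : ∀ u ∈ S, ∀ v, ¬ A u v)
include hS

lemma card_le_sigmaMinus_of_sinks (he : IsHamOrientedCycle A e) : #S ≤ sigmaMinus A e := by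
  have : Finite (ZMod (Fintype.card V)) := Finite.of_equiv V e.symm
  have hback (u : S) : A (e (e.symm u + 1)) (e (e.symm u)) :=
    (he _).resolve_left fun h => hS u u.2 _ (by simpa using h)
  rw [← Nat.card_eq_finsetCard]
  exact Nat.card_le_card_of_injective (fun u => ⟨e.symm u, hback u⟩)
    fun u₁ u₂ h => Subtype.ext (e.symm.injective (congrArg Subtype.val h))

lemma card_le_sigmaPlus_of_sinks (he : IsHamOrientedCycle A e) : #S ≤ sigmaPlus A e := by
  have : Finite (ZMod (Fintype.card V)) := Finite.of_equiv V e.symm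
  have hforw (u : S) : A (e (e.symm u - 1)) (e (e.symm u - 1 + 1)) :=
    (he _).resolve_right fun h => hS u u.2 _ (by simpa using h)
  rw [← Nat.card_eq_finsetCard]
  exact Nat.card_le_card_of_injective (fun u => ⟨e.symm u - 1, hforw u⟩)
    fun u₁ u₂ h => Subtype.ext (e.symm.injective (sub_left_injective (congrArg Subtype.val h)))

lemma sigmaMax_le_card_sub_of_sinks (hA : IsOriented A) (he : IsHamOrientedCycle A e) :
    sigmaMax A e ≤ Fintype.card V - #S := by
  have hsum := sigmaPlus_add_sigmaMinus hA he
  have hplus := card_le_sigmaPlus_of_sinks S hS he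
  have hminus := card_le_sigmaMinus_of_sinks S hS he
  rw [sigmaMax]
  omega

end OrientedCycle

/-- `A = {0, …, δ - 1}`, `v₀ = δ`, and `B = {δ + 1, …, n - 1}` carries the transitive
tournament `u → v` for `u < v`. -/
def extremalArc (δ : ℕ) {n : ℕ} (u v : Fin n) : Prop :=
  (δ ≤ u.val ∧ v.val < δ) ∨ (δ < u.val ∧ δ < v.val ∧ u.val < v.val)

lemma isOriented_extremalArc (δ n : ℕ) : IsOriented (extremalArc δ (n := n)) := by
  intro u v h
  refine ⟨?_, fun h' => ?_⟩
  · rintro rfl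
    simp only [extremalArc] at h
    omega
  · simp only [extremalArc] at h h'
    omega

lemma deg_extremalArc {n δ : ℕ} (hn : δ < n) (v : Fin n) :
    deg (extremalArc δ) v = if v.val < δ then n - δ else if v.val = δ then δ else n - 2 := by
  split_ifs with hA hv₀
  · rw [deg_eq_card {u | ¬ u.val < δ} fun u => by simp only [extremalArc, mem_filter_univ]; omega,
      filter_not, card_sdiff_of_subset (filter_subset _ _), Fin.card_filter_val_lt, card_univ,
      Fintype.card_fin]
    omega
  · rw [deg_eq_card {u | u.val < δ} fun u => by simp only [extremalArc, mem_filter_univ]; omega,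
      Fin.card_filter_val_lt]
    omega
  · have hv₀v : (⟨δ, hn⟩ : Fin n) ≠ v := fun h => hv₀ (congrArg Fin.val h).symm
    rw [deg_eq_card {⟨δ, hn⟩, v}ᶜ fun u => by
        simp only [extremalArc, mem_compl, mem_insert, mem_singleton, Fin.ext_iff]; omega,
      card_compl, card_pair hv₀v, Fintype.card_fin]

/-- For every `δ ≥ 2` and `n > 2δ` there is an oriented graph on `n`
vertices with minimum degree `δ` satisfying the Ore-type condition, all of whose
Hamilton oriented cycles `C` satisfy `σ_max(C) ≤ n - δ`. -/
theorem stmt6 (n δ : ℕ) (hδ : 2 ≤ δ) (hn : 2 * δ < n) :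
    ∃ A : Fin n → Fin n → Prop, IsOriented A ∧
      (∀ v, δ ≤ deg A v) ∧ (∃ v, deg A v = δ) ∧
      (∀ u v : Fin n, u ≠ v → ¬ A u v → ¬ A v u → n ≤ deg A u + deg A v) ∧
      ∀ e : ZMod (Fintype.card (Fin n)) ≃ Fin n,
        IsHamOrientedCycle A e → sigmaMax A e ≤ n - δ := by
  have hdeg := deg_extremalArc (by omega : δ < n)
  refine ⟨extremalArc δ, isOriented_extremalArc δ n, fun v => ?_, ⟨⟨δ, by omega⟩, ?_⟩,
    fun u v huv hnuv hnvu => ?_, fun e he => ?_⟩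
  · rw [hdeg]
    split_ifs <;> omega
  · simp [hdeg]
  · have hval : u.val ≠ v.val := fun h => huv (Fin.ext h)
    simp only [extremalArc] at hnuv hnvu
    rw [hdeg, hdeg]
    split_ifs <;> omega
  · have hsinks : ∀ u ∈ ({u | u.val < δ} : Finset (Fin n)), ∀ v, ¬ extremalArc δ u v := by
      intro u hu v
      simp only [extremalArc, mem_filter_univ] at hu ⊢
      omega
    have := sigmaMax_le_card_sub_of_sinks _ hsinks (isOriented_extremalArc δ n) he
    rwa [Fin.card_filter_val_lt, Fintype.card_fin, min_eq_right (by omega)] at this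
end

section
/- Let n ≥ k + 4 with k ≥ 0 and n + k even. Let D be the oriented graph with vertex set A ∪ B where |A| = (n−k)/2 is an independent set, B induces a tournament on (n+k)/2 vertices, and every vertex of B has an arc to every vertex of A. Then s*(D) = k and every Hamilton oriented cycle C of D satisfies σ_max(C) ≤ (n+k)/2. -/
open Classical in
/-- `s*(D)`: the minimum of `d(u)+d(v)-n` over pairs of distinct non-adjacent vertices,
or `n-2` if there are no such pairs (i.e. `D` is a tournament). -/
noncomputable def sStar {V : Type*} [Fintype V] (A : V → V → Prop) : ℤ :=
  if (∃ u v : V, u ≠ v ∧ ¬ A u v ∧ ¬ A v u) then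
    sInf {z : ℤ | ∃ u v : V, u ≠ v ∧ ¬ A u v ∧ ¬ A v u ∧
      z = (deg A u : ℤ) + (deg A v : ℤ) - (Fintype.card V : ℤ)}
  else (Fintype.card V : ℤ) - 2

/-!
Every vertex of `S` is a sink whose neighbourhood is exactly the tournament part, and two
distinct vertices are non-adjacent only if both lie in `S`; hence every non-adjacent pair has
degree sum `2(n - |S|)`, which gives `s* = n - 2|S| = k`. On any cyclic ordering, a position
holding a vertex of `S` cannot start a forward arc, and a position followed by a vertex of `S`
cannot start a backward arc, so each of `σ⁺`, `σ⁻` is at most `n - |S| = (n + k)/2`.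
-/

open Function

theorem sStar_eq_of_forall_nonadj {V : Type*} [Fintype V] {A : V → V → Prop} (c : ℤ)
    (hex : ∃ u v : V, u ≠ v ∧ ¬ A u v ∧ ¬ A v u)
    (hc : ∀ u v : V, u ≠ v → ¬ A u v → ¬ A v u →
      (deg A u : ℤ) + deg A v - Fintype.card V = c) :
    sStar A = c := by
  rw [sStar, if_pos hex]
  convert csInf_singleton c
  ext z
  constructor
  · rintro ⟨u, v, huv, h₁, h₂, rfl⟩
    exact hc u v huv h₁ h₂
  · rintro rfl
    obtain ⟨u, v, huv, h₁, h₂⟩ := hex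
    exact ⟨u, v, huv, h₁, h₂, (hc u v huv h₁ h₂).symm⟩

theorem natCard_le_card_sub_of_injective {ι V : Type*} [Fintype V] {P : ι → Prop}
    (S : Finset V) {g : ι → V} (hg : Injective g) (hP : ∀ i, P i → g i ∉ S) :
    Nat.card {i // P i} ≤ Fintype.card V - S.card := by
  calc Nat.card {i // P i} ≤ Nat.card {v // v ∉ S} :=
        Nat.card_le_card_of_injective (fun i => ⟨g i, hP i i.2⟩)
          fun i j hij => Subtype.ext (hg (congrArg Subtype.val hij))
    _ = Fintype.card V - S.card := by
        classical
        rw [Nat.card_eq_fintype_card, Fintype.card_subtype_compl, Fintype.card_coe]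

section Sinks

variable {V : Type*} [Fintype V] {A : V → V → Prop} {S : Finset V}

theorem sigmaMax_le_card_sub_of_sink (hsink : ∀ u ∈ S, ∀ v, ¬ A u v)
    (e : ZMod (Fintype.card V) ≃ V) :
    sigmaMax A e ≤ Fintype.card V - S.card :=
  max_le
    (natCard_le_card_sub_of_injective S e.injective fun _ h hS => hsink _ hS _ h)
    (natCard_le_card_sub_of_injective S (e.injective.comp (add_left_injective 1))
      fun _ h hS => hsink _ hS _ h)

variable (hind : ∀ u ∈ S, ∀ v ∈ S, ¬ A u v) (hBA : ∀ u v : V, u ∉ S → v ∈ S → A u v)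
include hind hBA

theorem deg_eq_card_sub_of_mem {u : V} (hu : u ∈ S) : deg A u = Fintype.card V - S.card := by
  have hadj : ∀ w, (A u w ∨ A w u) ↔ w ∉ S := fun w =>
    ⟨by rintro (h | h) hw; exacts [hind u hu w hw h, hind w hw u hu h],
      fun hw => Or.inr (hBA w u hw hu)⟩
  classical
  rw [deg, Nat.card_congr (Equiv.subtypeEquivRight hadj), Nat.card_eq_fintype_card,
    Fintype.card_subtype_compl, Fintype.card_coe]

theorem sStar_eq_card_sub_two_mul (htour : ∀ u v : V, u ∉ S → v ∉ S → u ≠ v → A u v ∨ A v u)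
    (hS : 2 ≤ S.card) :
    sStar A = Fintype.card V - 2 * S.card := by
  have hmem : ∀ u v, u ≠ v → ¬ A u v → ¬ A v u → u ∈ S := fun u v huv h₁ h₂ => by
    by_contra hu
    by_cases hv : v ∈ S
    · exact h₁ (hBA u v hu hv)
    · exact (htour u v hu hv huv).elim h₁ h₂
  obtain ⟨a, ha, b, hb, hab⟩ := Finset.one_lt_card.mp hS
  refine sStar_eq_of_forall_nonadj _ ⟨a, b, hab, hind a ha b hb, hind b hb a ha⟩ ?_
  intro u v huv h₁ h₂
  have hSV : S.card ≤ Fintype.card V := Finset.card_le_univ S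
  rw [deg_eq_card_sub_of_mem hind hBA (hmem u v huv h₁ h₂),
    deg_eq_card_sub_of_mem hind hBA (hmem v u huv.symm h₂ h₁)]
  omega

end Sinks

theorem stmt7_general (n k : ℕ) (hn : k + 4 ≤ n) (hpar : Even (n + k))
    {V : Type*} [Fintype V] (hcard : Fintype.card V = n)
    (A : V → V → Prop) (hA : IsOriented A)
    (S : Finset V) (hScard : S.card = (n - k) / 2)
    (hind : ∀ u ∈ S, ∀ v ∈ S, ¬ A u v)
    (htour : ∀ u v : V, u ∉ S → v ∉ S → u ≠ v → A u v ∨ A v u)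
    (hBA : ∀ u v : V, u ∉ S → v ∈ S → A u v) :
    sStar A = (k : ℤ) ∧
      ∀ e : ZMod (Fintype.card V) ≃ V, IsHamOrientedCycle A e →
        sigmaMax A e ≤ (n + k) / 2 := by
  obtain ⟨m, hm⟩ := hpar
  have hsink : ∀ u ∈ S, ∀ v, ¬ A u v := fun u hu v huv => by
    by_cases hv : v ∈ S
    · exact hind u hu v hv huv
    · exact (hA v u (hBA v u hv hu)).2 huv
  refine ⟨?_, fun e _ => ?_⟩
  · rw [sStar_eq_card_sub_two_mul hind hBA htour (by omega), hcard]
    omega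
  · exact (sigmaMax_le_card_sub_of_sink hsink e).trans (by omega)

/-- the tight example for Conjecture 2 (case `n + k` even): an oriented
graph on `n ≥ k + 4` vertices consisting of an independent set `S` of size `(n-k)/2`,
a tournament on the remaining `(n+k)/2` vertices, and all arcs from the tournament part
to `S`, has `s* = k` and every Hamilton oriented cycle `C` has `σ_max(C) ≤ (n+k)/2`. -/
theorem stmt7 (n k : ℕ) (hn : k + 4 ≤ n) (hpar : Even (n + k))
    {V : Type*} [Fintype V] (hcard : Fintype.card V = n)
    (A : V → V → Prop) (hA : IsOriented A)
    (S : Finset V) (hScard : S.card = (n - k) / 2)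
    (hind : ∀ u ∈ S, ∀ v ∈ S, ¬ A u v)
    (htour : ∀ u v : V, u ∉ S → v ∉ S → u ≠ v → A u v ∨ A v u)
    (hBA : ∀ u v : V, u ∉ S → v ∈ S → A u v)
    (hAB : ∀ u v : V, u ∈ S → v ∉ S → ¬ A u v) :
    sStar A = (k : ℤ) ∧
      ∀ e : ZMod (Fintype.card V) ≃ V, IsHamOrientedCycle A e →
        sigmaMax A e ≤ (n + k) / 2 :=
  stmt7_general n k hn hpar hcard A hA S hScard hind htour hBA
end

section
/- A semicomplete multipartite digraph D with partite sets of sizes n₁,…,n_p has a Hamilton oriented path if and only if 2·max{n_i : i ∈ [p]} ≤ (n₁ + ⋯ + n_p) + 1. -/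
/-!
Only the partition matters: a listing of the vertices is a Hamilton oriented path iff
consecutive vertices lie in different partite sets. For necessity, the positions `i` of the
vertices of one partite set and their successors `i + 1` form disjoint subsets of `{0, …, n}`.
For sufficiency, list the vertices partite set by partite set, largest set first, and put the
`k`-th vertex of this list at position `2k` for `k < ⌈n/2⌉` and at position `2(k - ⌈n/2⌉) + 1`
otherwise. Neighbours in the new order are `⌈n/2⌉` or `⌈n/2⌉ - 1` apart in the list. A partite
set of size at most `⌈n/2⌉` cannot span the first gap, and spans the second only if it has
exactly `⌈n/2⌉` elements and misses the first vertex; but then the largest set, which precedes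
it, leaves it no room.
-/

/-- `A` is a semicomplete multipartite digraph with partition map `part`: there are no
loops, and two vertices are joined by at least one arc iff they are in different
partite sets. -/
def IsSemicompleteMultipartite {V : Type*} {p : ℕ} (A : V → V → Prop)
    (part : V → Fin p) : Prop :=
  (∀ v, ¬ A v v) ∧ ∀ u v : V, (A u v ∨ A v u) ↔ part u ≠ part v

/-- `f` lists the vertices of a Hamilton oriented path of the digraph `A`. -/
def IsHamOrientedPath {V : Type*} [Fintype V] (A : V → V → Prop)
    (f : Fin (Fintype.card V) ≃ V) : Prop :=
  ∀ i : ℕ, ∀ h : i + 1 < Fintype.card V,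
    A (f ⟨i, Nat.lt_of_succ_lt h⟩) (f ⟨i + 1, h⟩) ∨
      A (f ⟨i + 1, h⟩) (f ⟨i, Nat.lt_of_succ_lt h⟩)

/-- `f` lists the vertices of a Hamilton (directed) path of the digraph `A`. -/
def IsHamDipath {V : Type*} [Fintype V] (A : V → V → Prop)
    (f : Fin (Fintype.card V) ≃ V) : Prop :=
  ∀ i : ℕ, ∀ h : i + 1 < Fintype.card V,
    A (f ⟨i, Nat.lt_of_succ_lt h⟩) (f ⟨i + 1, h⟩)

/-- Out-degree of `v` in the digraph `F`. -/
noncomputable def outdeg {V : Type*} [Fintype V] (F : V → V → Prop) (v : V) : ℕ :=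
  Nat.card {u : V // F v u}

/-- In-degree of `v` in the digraph `F`. -/
noncomputable def indeg {V : Type*} [Fintype V] (F : V → V → Prop) (v : V) : ℕ :=
  Nat.card {u : V // F u v}

/-- `F` is a 1-path-cycle factor of the digraph `A`: a spanning subdigraph in which
every vertex has in- and out-degree at most one, with exactly one vertex of in-degree 0
and exactly one vertex of out-degree 0; such a subdigraph consists of one directed path
together with a vertex-disjoint collection of directed cycles, covering all vertices. -/
def IsOnePathCycleFactor {V : Type*} [Fintype V] (A F : V → V → Prop) : Prop :=
  (∀ u v, F u v → A u v) ∧ (∀ v, outdeg F v ≤ 1 ∧ indeg F v ≤ 1) ∧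
    (∃! s, indeg F s = 0) ∧ (∃! t, outdeg F t = 0)

open Finset

section AdjacentDistinct

variable {α : Type*} {n : ℕ}

def AdjacentDistinct (c : Fin n → α) : Prop :=
  ∀ i : ℕ, ∀ h : i + 1 < n, c ⟨i, Nat.lt_of_succ_lt h⟩ ≠ c ⟨i + 1, h⟩

theorem AdjacentDistinct.two_mul_card_fiber_le [DecidableEq α] {c : Fin n → α}
    (hc : AdjacentDistinct c) (a : α) : 2 * #{i | c i = a} ≤ n + 1 := by
  set S := ({i | c i = a} : Finset (Fin n))
  have hdisj : Disjoint (S.map Fin.castSuccEmb) (S.map (Fin.succEmb n)) := by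
    simp only [disjoint_left, mem_map, Fin.coe_castSuccEmb, Fin.coe_succEmb]
    rintro _ ⟨i, hi, rfl⟩ ⟨j, hj, hji⟩
    have hval : (i : ℕ) = j + 1 := by simpa [Fin.ext_iff] using hji.symm
    have hlt : (j : ℕ) + 1 < n := hval ▸ i.isLt
    refine hc j hlt ?_
    simp only [S, mem_filter, mem_univ, true_and] at hi hj
    rw [show (⟨j + 1, hlt⟩ : Fin n) = i from Fin.ext hval.symm, hi, ← hj]
  calc 2 * #S = #(S.map Fin.castSuccEmb ∪ S.map (Fin.succEmb n)) := by
        rw [card_union_of_disjoint hdisj, card_map, card_map]; ring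
    _ ≤ #(univ : Finset (Fin (n + 1))) := card_le_univ _
    _ = n + 1 := card_fin _

end AdjacentDistinct

noncomputable def interleave (n : ℕ) : Equiv.Perm (Fin n) :=
  Equiv.ofBijective
    (fun j => ⟨if j.val % 2 = 0 then j / 2 else (n + 1) / 2 + j / 2, by split <;> omega⟩)
    (Finite.injective_iff_bijective.mp fun j₁ j₂ h => by
      have := congrArg Fin.val h
      simp only at this
      ext
      split_ifs at this <;> omega)

theorem interleave_of_even {n k : ℕ} {j : Fin n} (hj : (j : ℕ) = 2 * k) :
    (interleave n j : ℕ) = k := by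
  simp [interleave, hj]

theorem interleave_of_odd {n k : ℕ} {j : Fin n} (hj : (j : ℕ) = 2 * k + 1) :
    (interleave n j : ℕ) = (n + 1) / 2 + k := by
  simp only [interleave, Equiv.ofBijective_apply, hj]
  split_ifs <;> omega

section Blocks

variable {α : Type*} [DecidableEq α] {n : ℕ} {s : Fin n → α}

theorem le_card_fiber_of_ordConnected {t₁ t₂ : Fin n} (hs : (s ⁻¹' {s t₁}).OrdConnected)
    (heq : s t₁ = s t₂) : (t₂ : ℕ) + 1 - t₁ ≤ #{u | s u = s t₁} := by
  rw [← Fin.card_Icc]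
  refine card_le_card fun u hu => ?_
  simpa using hs.out rfl heq.symm (mem_Icc.mp hu)

theorem card_fiber_le_of_isBot {z t : Fin n} (hz : IsBot z) (hs : (s ⁻¹' {s z}).OrdConnected)
    (hne : s t ≠ s z) : #{u | s u = s z} ≤ t := by
  rw [← Fin.card_Iio]
  refine card_le_card fun u hu => mem_Iio.mpr <| lt_of_not_ge fun htu => hne ?_
  simp only [mem_filter, mem_univ, true_and] at hu
  exact hs.out rfl hu ⟨hz t, htu⟩

theorem adjacentDistinct_comp_interleave (hconn : ∀ a, (s ⁻¹' {a}).OrdConnected)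
    (hanti : Antitone fun t => #{u | s u = s t})
    (hbound : ∀ a, 2 * #{u | s u = a} ≤ n + 1) :
    AdjacentDistinct (s ∘ interleave n) := by
  intro i hi heq
  simp only [Function.comp_apply] at heq
  set x := interleave n ⟨i, Nat.lt_of_succ_lt hi⟩
  set y := interleave n ⟨i + 1, hi⟩
  obtain ⟨k, rfl | rfl⟩ := Nat.even_or_odd' i
  · have hx : (x : ℕ) = k := interleave_of_even rfl
    have hy : (y : ℕ) = (n + 1) / 2 + k := interleave_of_odd rfl
    have := le_card_fiber_of_ordConnected (hconn _) heq
    have := hbound (s x)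
    omega
  · have hx : (x : ℕ) = (n + 1) / 2 + k := interleave_of_odd rfl
    have hy : (y : ℕ) = k + 1 := interleave_of_even (by dsimp only; omega)
    clear_value x y
    have hxy := le_card_fiber_of_ordConnected (hconn _) heq.symm
    obtain ⟨z, hz0⟩ : ∃ z : Fin n, (z : ℕ) = 0 := ⟨⟨0, by omega⟩, rfl⟩
    have hz : IsBot z := fun _ => Fin.le_def.mpr (hz0 ▸ Nat.zero_le _)
    have hzy : #{u | s u = s y} ≤ #{u | s u = s z} := hanti (hz y)
    by_cases hzy' : s z = s y
    · have := le_card_fiber_of_ordConnected (hconn _) (hzy'.trans heq.symm)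
      have := hbound (s z)
      omega
    · have := card_fiber_le_of_isBot hz (hconn _) (Ne.symm hzy')
      omega

end Blocks

theorem card_filter_comp_equiv {β V α : Type*} [Fintype β] [DecidableEq α] (f : β ≃ V)
    (c : V → α) (a : α) : #{t | c (f t) = a} = Nat.card {v // c v = a} := by
  rw [← Fintype.card_subtype, ← Nat.card_eq_fintype_card]
  exact Nat.card_congr (f.subtypeEquiv fun _ => Iff.rfl)

section Fintype

variable {V α : Type*} [Fintype V] [LinearOrder α]

theorem exists_equiv_ordConnected_antitone (c : V → α) :
    ∃ w : Fin (Fintype.card V) ≃ V, (∀ a, (c ∘ w ⁻¹' {a}).OrdConnected) ∧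
      Antitone fun t => Nat.card {v // c v = c (w t)} := by
  let k : α → ℕᵒᵈ ×ₗ α := fun a => toLex (OrderDual.toDual (Nat.card {v // c v = a}), a)
  have hk : Function.Injective k := fun a b h => congrArg (fun x => (ofLex x).2) h
  let e := (Fintype.equivFin V).symm
  let w := (Tuple.sort (k ∘ c ∘ e)).trans e
  have hmono : Monotone (k ∘ c ∘ w) := Tuple.monotone_sort (k ∘ c ∘ e)
  refine ⟨w, fun a => ?_, fun t₁ t₂ h => Prod.Lex.monotone_fst _ _ (hmono h)⟩
  have hfiber : c ∘ w ⁻¹' {a} = (k ∘ c ∘ w) ⁻¹' {k a} := by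
    ext
    simp [hk.eq_iff]
  rw [hfiber]
  exact Set.ordConnected_singleton.preimage_mono hmono

theorem exists_adjacentDistinct_iff (c : V → α) :
    (∃ f : Fin (Fintype.card V) ≃ V, AdjacentDistinct (c ∘ f)) ↔
      ∀ a, 2 * Nat.card {v // c v = a} ≤ Fintype.card V + 1 := by
  constructor
  · rintro ⟨f, hf⟩ a
    rw [← card_filter_comp_equiv f]
    exact hf.two_mul_card_fiber_le a
  · intro hbound
    obtain ⟨w, hconn, hanti⟩ := exists_equiv_ordConnected_antitone c
    refine ⟨(interleave _).trans w, adjacentDistinct_comp_interleave hconn ?_ fun a => ?_⟩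
    · simpa only [Function.comp_apply, card_filter_comp_equiv] using hanti
    · simpa only [Function.comp_apply, card_filter_comp_equiv] using hbound a

theorem IsSemicompleteMultipartite.isHamOrientedPath_iff {p : ℕ} {A : V → V → Prop}
    {part : V → Fin p} (h : IsSemicompleteMultipartite A part) (f : Fin (Fintype.card V) ≃ V) :
    IsHamOrientedPath A f ↔ AdjacentDistinct (part ∘ f) :=
  forall₂_congr fun _ _ => h.2 _ _

end Fintype

theorem stmt10_general {V : Type*} [Fintype V] {p : ℕ}
    (A : V → V → Prop) (part : V → Fin p)
    (hsmd : IsSemicompleteMultipartite A part) :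
    (∃ f : Fin (Fintype.card V) ≃ V, IsHamOrientedPath A f) ↔
      ∀ i : Fin p, 2 * Nat.card {v : V // part v = i} ≤ Fintype.card V + 1 := by
  simp_rw [hsmd.isHamOrientedPath_iff]
  exact exists_adjacentDistinct_iff part

/-- a semicomplete multipartite digraph with partite sets of sizes
`n₁, …, n_p` has a Hamilton oriented path iff `2 max nᵢ ≤ (n₁ + ⋯ + n_p) + 1`. -/
theorem stmt10 {V : Type*} [Fintype V] {p : ℕ} (hp : 2 ≤ p)
    (A : V → V → Prop) (part : V → Fin p)
    (hsmd : IsSemicompleteMultipartite A part) (hne : Function.Surjective part) :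
    (∃ f : Fin (Fintype.card V) ≃ V, IsHamOrientedPath A f) ↔
      ∀ i : Fin p, 2 * Nat.card {v : V // part v = i} ≤ Fintype.card V + 1 :=
  stmt10_general A part hsmd
end

section
/- Let D be a connected locally semicomplete digraph that is not strong, with acyclic ordering of strong components C₁, C₂, …, C_ℓ. Then every oriented (C₁, C_ℓ)-path P in D contains at least d(C₁, C_ℓ) forward arcs. -/
/-! Follow the oriented path from `C₁` and track the directed distance from `C₁` to the current
vertex. A forward arc raises it by at most one. A backward arc `b → a` does not raise it: if
`u → a` ends a shortest walk from `C₁` to `a`, then `u` and `b` are both in-neighbours of `a`,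
hence adjacent, and either `u → b` or, inductively, `b` is no farther than `u`; the induction
bottoms out because `C₁`, the initial component, receives no arcs from outside. So the last
vertex of the path, which lies in `C_ℓ`, is within distance (number of forward arcs) of `C₁`,
and a walk from `C₁` to a nearest vertex of `C_ℓ` is a `(C₁, C_ℓ)`-path. -/

/-- `A` is a locally semicomplete digraph: the out-neighbourhood and the
in-neighbourhood of each vertex induce semicomplete digraphs. -/
def LocallySemicomplete {V : Type*} (A : V → V → Prop) : Prop :=
  ∀ x u v : V, u ≠ v →
    (A x u → A x v → A u v ∨ A v u) ∧ (A u x → A v x → A u v ∨ A v u)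

/-- The digraph `A` is connected (its underlying graph is connected). -/
def DigraphConnected {V : Type*} (A : V → V → Prop) : Prop :=
  ∀ u v : V, Relation.ReflTransGen (fun a b => A a b ∨ A b a) u v

/-- The digraph `A` is strongly connected. -/
def DigraphStrong {V : Type*} (A : V → V → Prop) : Prop :=
  ∀ u v : V, Relation.ReflTransGen A u v

/-- `comp : V → Fin ℓ` is the acyclic ordering of the strong components of `A`:
its fibres are the strong components and no arc goes backwards. -/
def IsAcyclicOrdering {V : Type*} (A : V → V → Prop) {ℓ : ℕ} (comp : V → Fin ℓ) : Prop :=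
  Function.Surjective comp ∧
    (∀ u v : V, comp u = comp v ↔
      (Relation.ReflTransGen A u v ∧ Relation.ReflTransGen A v u)) ∧
    (∀ u v : V, A u v → comp u ≤ comp v)

/-- `l` lists the vertices of an `(S,T)`-path for the relation `R`: the first vertex is
in `S`, the last in `T`, and the internal vertices avoid `S ∪ T`. -/
def IsSTPathList {V : Type*} (R : V → V → Prop) (S T : Set V) (l : List V) : Prop :=
  l.Chain' R ∧ l.Nodup ∧
    (∃ a ∈ S, l.head? = some a) ∧ (∃ b ∈ T, l.getLast? = some b) ∧
    ∀ v ∈ (l.drop 1).dropLast, v ∉ S ∪ T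

/-- The length `d(S,T)` of a shortest directed `(S,T)`-path in the digraph `A`. -/
noncomputable def distST {V : Type*} (A : V → V → Prop) (S T : Set V) : ℕ :=
  sInf {m : ℕ | ∃ l : List V, IsSTPathList A S T l ∧ l.length = m + 1}

section Forward

variable {V : Type*} (A : V → V → Prop)

theorem listForward_singleton (x : V) : listForward A [x] = 0 := by
  simp [listForward]

open Classical in
theorem listForward_cons_cons (x y : V) (t : List V) :
    listForward A (x :: y :: t) = listForward A (y :: t) + if A x y then 1 else 0 := by
  simp only [listForward, List.tail_cons, List.zip_cons_cons, List.countP_cons, decide_eq_true_eq]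

end Forward

section Reach

variable {V : Type*}

def LocallyInSemicomplete (A : V → V → Prop) : Prop :=
  ∀ x u v : V, u ≠ v → A u x → A v x → A u v ∨ A v u

theorem LocallySemicomplete.locallyInSemicomplete {A : V → V → Prop}
    (h : LocallySemicomplete A) : LocallyInSemicomplete A :=
  fun x u v huv => (h x u v huv).2

variable (A : V → V → Prop) (S : Set V)

def ReachIn : ℕ → V → Prop
  | 0, v => v ∈ S
  | n + 1, v => ∃ u, ReachIn n u ∧ A u v

variable {A S}

theorem ReachIn.exists_le_of_in_arc (hin : LocallyInSemicomplete A)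
    (hS : ∀ u v, A u v → v ∈ S → u ∈ S) {k : ℕ} {a b : V}
    (ha : ReachIn A S k a) (hba : A b a) : ∃ m ≤ k, ReachIn A S m b := by
  induction k generalizing a b with
  | zero => exact ⟨0, le_rfl, hS b a hba ha⟩
  | succ k ih =>
    obtain ⟨u, hu, hua⟩ := ha
    by_cases hbu : b = u
    · exact ⟨k, k.le_succ, hbu ▸ hu⟩
    rcases hin a u b (Ne.symm hbu) hua hba with hub | hbu'
    · exact ⟨k + 1, le_rfl, u, hu, hub⟩
    · obtain ⟨m, hm, hb⟩ := ih hu hbu'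
      exact ⟨m, hm.trans k.le_succ, hb⟩

theorem exists_reachIn_le_listForward (hin : LocallyInSemicomplete A)
    (hS : ∀ u v, A u v → v ∈ S → u ∈ S) {x y : V} {xs : List V} {k : ℕ}
    (hpath : (x :: xs).IsChain fun a b => A a b ∨ A b a) (hlast : (x :: xs).getLast? = some y)
    (hx : ∃ m ≤ k, ReachIn A S m x) : ∃ m ≤ k + listForward A (x :: xs), ReachIn A S m y := by
  induction xs generalizing x k with
  | nil =>
    obtain rfl : x = y := by simpa using hlast
    simpa [listForward_singleton] using hx
  | cons z t ih =>
    obtain ⟨hxz, hpath⟩ := List.isChain_cons_cons.mp hpath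
    rw [List.getLast?_cons_cons] at hlast
    obtain ⟨m, hm, hxm⟩ := hx
    rw [listForward_cons_cons]
    by_cases hA : A x z
    · obtain ⟨m', hm', hy⟩ := ih (k := k + 1) hpath hlast ⟨m + 1, by omega, x, hxm, hA⟩
      exact ⟨m', by simp only [hA, if_true]; omega, hy⟩
    · obtain ⟨m', hm', hz⟩ := hxm.exists_le_of_in_arc hin hS (hxz.resolve_left hA)
      obtain ⟨m'', hm'', hy⟩ := ih (k := k) hpath hlast ⟨m', hm'.trans hm, hz⟩
      exact ⟨m'', by omega, hy⟩

theorem exists_chain_of_reachIn_of_forall_lt_not_reachIn :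
    ∀ {n : ℕ} {v : V}, ReachIn A S n v → (∀ m < n, ¬ ReachIn A S m v) →
    ∃ a ∈ S, ∃ r : List V, (a :: r).IsChain A ∧ (a :: r).Nodup ∧ (a :: r).getLast? = some v ∧
      r.length = n ∧ (∀ w ∈ r, w ∉ S) ∧ ∀ w ∈ (a :: r).dropLast, ∃ m < n, ReachIn A S m w
  | 0, v, hv, _ => ⟨v, hv, [], List.isChain_singleton v, by simp⟩
  | n + 1, v, ⟨u, hu, huv⟩, hmin => by
    have hu_min : ∀ m < n, ¬ ReachIn A S m u :=
      fun m hm hum => hmin (m + 1) (by omega) ⟨u, hum, huv⟩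
    obtain ⟨a, ha, r, hchain, hnodup, hlast, hlen, hrS, hdrop⟩ :=
      exists_chain_of_reachIn_of_forall_lt_not_reachIn hu hu_min
    have hprev : ∀ w ∈ a :: r, ∃ m < n + 1, ReachIn A S m w := by
      obtain ⟨ys, hys⟩ := List.getLast?_eq_some_iff.mp hlast
      rw [hys, List.dropLast_concat] at hdrop
      intro w hw
      rcases List.mem_append.mp (hys ▸ hw) with hw | hw
      · obtain ⟨m, hm, hwm⟩ := hdrop w hw
        exact ⟨m, by omega, hwm⟩
      · exact ⟨n, by omega, List.eq_of_mem_singleton hw ▸ hu⟩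
    have hv_new : ∀ w ∈ a :: r, w ≠ v := by
      rintro w hw rfl
      obtain ⟨m, hm, hwm⟩ := hprev w hw
      exact hmin m hm hwm
    refine ⟨a, ha, r ++ [v], ?_, ?_, ?_, by simp [hlen], ?_, ?_⟩
    · rw [← List.cons_append, List.isChain_append]
      exact ⟨hchain, List.isChain_singleton v, by simpa [hlast] using huv⟩
    · rw [← List.cons_append, List.nodup_append]
      exact ⟨hnodup, List.nodup_singleton v,
        fun w hw _ hv => List.eq_of_mem_singleton hv ▸ hv_new w hw⟩
    · rw [← List.cons_append, List.getLast?_concat]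
    · intro w hw
      rcases List.mem_append.mp hw with hw | hw
      · exact hrS w hw
      · exact List.eq_of_mem_singleton hw ▸ hmin 0 (by omega)
    · rwa [← List.cons_append, List.dropLast_concat]

theorem distST_le_of_reachIn {T : Set V} {n : ℕ} {t : V} (ht : t ∈ T)
    (h : ReachIn A S n t) : distST A S T ≤ n := by
  classical
  have hex : ∃ n, ∃ t ∈ T, ReachIn A S n t := ⟨n, t, ht, h⟩
  have hmin : ∀ m < Nat.find hex, ∀ w ∈ T, ¬ ReachIn A S m w :=
    fun m hm w hw hwm => Nat.find_min hex hm ⟨w, hw, hwm⟩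
  obtain ⟨t₀, ht₀, ht₀_reach⟩ := Nat.find_spec hex
  obtain ⟨a, ha, r, hchain, hnodup, hlast, hlen, hrS, hdrop⟩ :=
    exists_chain_of_reachIn_of_forall_lt_not_reachIn ht₀_reach fun m hm => hmin m hm t₀ ht₀
  have hpath : IsSTPathList A S T (a :: r) := by
    refine ⟨hchain, hnodup, ⟨a, ha, rfl⟩, ⟨t₀, ht₀, hlast⟩, fun w hw hwST => ?_⟩
    rw [List.drop_one, List.tail_cons] at hw
    have hr : r ≠ [] := by rintro rfl; simp at hw
    have hw' : w ∈ (a :: r).dropLast := by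
      rw [List.dropLast_cons_of_ne_nil hr]
      exact List.mem_cons_of_mem a hw
    rcases hwST with hwS | hwT
    · exact hrS w (List.mem_of_mem_dropLast hw) hwS
    · obtain ⟨m, hm, hwm⟩ := hdrop w hw'
      exact hmin m hm w hwT hwm
  calc distST A S T ≤ Nat.find hex := Nat.sInf_le ⟨a :: r, hpath, by simp [hlen]⟩
    _ ≤ n := Nat.find_min' hex ⟨t, ht, h⟩

end Reach

theorem stmt14_general {V : Type*} (A : V → V → Prop)
    (hls : LocallySemicomplete A) {ℓ : ℕ} (comp : V → Fin ℓ)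
    (hord : IsAcyclicOrdering A comp)
    (c1 cl : Fin ℓ) (hc1 : ∀ d, c1 ≤ d)
    (l : List V)
    (hl : IsSTPathList (fun a b => A a b ∨ A b a)
      {v | comp v = c1} {v | comp v = cl} l) :
    distST A {v | comp v = c1} {v | comp v = cl} ≤ listForward A l := by
  obtain ⟨hchain, -, ⟨a, ha, hhead⟩, ⟨b, hb, hlast⟩, -⟩ := hl
  obtain ⟨xs, rfl⟩ := List.head?_eq_some_iff.mp hhead
  have hC₁ : ∀ u v, A u v → v ∈ {v | comp v = c1} → u ∈ {v | comp v = c1} :=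
    fun u v huv hv => le_antisymm (hv ▸ hord.2.2 u v huv) (hc1 _)
  obtain ⟨m, hm, hb_reach⟩ := exists_reachIn_le_listForward hls.locallyInSemicomplete hC₁
    hchain hlast ⟨0, le_rfl, ha⟩
  exact (distST_le_of_reachIn hb hb_reach).trans (by omega)

/-- in a connected non-strong locally semicomplete digraph with acyclic
ordering of strong components `C₁, …, C_ℓ`, every oriented `(C₁, C_ℓ)`-path has at
least `d(C₁, C_ℓ)` forward arcs. -/
theorem stmt14 {V : Type*} [Fintype V] (A : V → V → Prop)
    (hls : LocallySemicomplete A) (hconn : DigraphConnected A)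
    (hns : ¬ DigraphStrong A) {ℓ : ℕ} (comp : V → Fin ℓ)
    (hord : IsAcyclicOrdering A comp)
    (c1 cl : Fin ℓ) (hc1 : ∀ d, c1 ≤ d) (hcl : ∀ d, d ≤ cl)
    (l : List V)
    (hl : IsSTPathList (fun a b => A a b ∨ A b a)
      {v | comp v = c1} {v | comp v = cl} l) :
    distST A {v | comp v = c1} {v | comp v = cl} ≤ listForward A l :=
  stmt14_general A hls comp hord c1 cl hc1 l hl
end

section
/- Every connected locally semicomplete digraph has a Hamilton directed path, and every strong locally semicomplete digraph on at least 2 vertices has a Hamilton directed cycle. -/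
/-!
Let `x → v` with `x` on a path or cycle and `v` off it, and let `x'` follow `x`. Since `v` and `x'`
are out-neighbours of `x`, they are adjacent: either `v → x'`, and `v` can be inserted between
`x` and `x'`, or `x' → v`, and the argument continues from `x'`. So `v` can be inserted unless all
vertices from `x` onwards dominate it. A longest path therefore absorbs any vertex adjacent to it
(an out-neighbour of the path is appended at its end, an in-neighbour prepended, by symmetry), so
in a connected digraph it is Hamiltonian. If a longest cycle `C` in a strong digraph misses a vertex,
take an arc `x → y` leaving `C` and a path `y ⋯ b` that runs outside `C` back to `b ∈ C`. If `y`
cannot be inserted, every vertex of `C` dominates `y`, and going once round `C` from `b`, then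
through `y ⋯ b`, gives a longer cycle.
-/

open Relation List

namespace Relation.ReflTransGen

variable {α : Type*} {r : α → α → Prop} {S : Set α} {a b : α}

theorem exists_rel_mem_notMem (h : ReflTransGen r a b) (ha : a ∈ S) (hb : b ∉ S) :
    ∃ x ∈ S, ∃ y ∉ S, r x y := by
  induction h with
  | refl => exact absurd ha hb
  | @tail c d _ hcd ih =>
    by_cases hc : c ∈ S
    · exact ⟨c, hc, d, hb, hcd⟩
    · exact ih hc

theorem exists_path_to_mem (h : ReflTransGen r a b) (ha : a ∉ S) (hb : b ∈ S) :
    ∃ q c, IsChain r (a :: q ++ [c]) ∧ (a :: q).Nodup ∧ (∀ x ∈ a :: q, x ∉ S) ∧ c ∈ S := by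
  induction h using ReflTransGen.head_induction_on with
  | refl => exact absurd hb ha
  | @head a c hac _ ih =>
    by_cases hc : c ∈ S
    · exact ⟨[], c, by simpa using hac, by simp, by simpa using ha, hc⟩
    obtain ⟨q, d, hch, hnd, hout, hd⟩ := ih hc
    by_cases haq : a ∈ c :: q
    · obtain ⟨s, t, hst⟩ := List.append_of_mem haq
      rw [hst] at hch hnd hout
      refine ⟨t, d, ?_, hnd.sublist (sublist_append_right _ _),
        fun x hx => hout x (by simp_all), hd⟩
      simpa using (isChain_append.1 (by simpa using hch : IsChain r (s ++ (a :: t ++ [d])))).2.1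
    · exact ⟨c :: q, d, hch.cons (by simpa using hac), nodup_cons.2 ⟨haq, hnd⟩,
        by simpa [ha] using hout, hd⟩

end Relation.ReflTransGen

theorem List.exists_cons_isRotated {α : Type*} {l : List α} {x : α} (hx : x ∈ l) :
    ∃ t, (x :: t) ~r l := by
  obtain ⟨s, t, rfl⟩ := append_of_mem hx
  exact ⟨t ++ s, isRotated_append (l := x :: t)⟩

theorem List.exists_forall_mem_of_exists_longer {α : Type*} [Fintype α] {P : List α → Prop}
    (hnd : ∀ l, P l → l.Nodup)
    (hstep : ∀ l, P l → ∀ v, v ∉ l → ∃ l', P l' ∧ l.length < l'.length)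
    {l : List α} (hl : P l) : ∃ l, P l ∧ ∀ v, v ∈ l := by
  induction h : Fintype.card α - l.length using Nat.strong_induction_on generalizing l with
  | _ n ih =>
    by_cases hall : ∀ v, v ∈ l
    · exact ⟨l, hl, hall⟩
    push Not at hall
    obtain ⟨v, hv⟩ := hall
    obtain ⟨l', hl', hlt⟩ := hstep l hl v hv
    have := (hnd l' hl').length_le_card
    exact ih _ (by omega) hl' rfl

theorem List.Nodup.length_eq_card {α : Type*} [Fintype α] {l : List α} (hnd : l.Nodup)
    (hall : ∀ v, v ∈ l) : l.length = Fintype.card α := by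
  classical
  simpa using Fintype.card_congr (hnd.getEquivOfForallMemList l hall)

section Digraph

variable {V : Type*} {A : V → V → Prop}

theorem Cycle.Chain.rel_getElem_mod {l : List V} (hl : Cycle.Chain A (l : Cycle V)) (i : ℕ)
    (hi : i < l.length) : A l[i] (l[(i + 1) % l.length]'(Nat.mod_lt _ (by omega))) := by
  obtain ⟨a, m, rfl⟩ := exists_cons_of_ne_nil (ne_nil_of_length_pos (by omega : 0 < l.length))
  have hW := (isChain_iff_getElem (l := (a :: m) ++ [a])).1 ((Cycle.chain_coe_cons _ _ _).1 hl) i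
    (by simp at hi ⊢; omega)
  rw [getElem_append_left hi] at hW
  rcases Nat.lt_or_ge (i + 1) (a :: m).length with hlt | hge
  · simpa only [getElem_append_left hlt, Nat.mod_eq_of_lt hlt] using hW
  · have hlen : i + 1 = (a :: m).length := by omega
    simpa only [hlen, Nat.mod_self, getElem_append_right le_rfl, Nat.sub_self, getElem_cons_zero]
      using hW

theorem exists_finEquiv_of_isChain [Fintype V] {l : List V} (hnd : l.Nodup) (hall : ∀ v, v ∈ l)
    (hl : IsChain A l) :
    ∃ f : Fin (Fintype.card V) ≃ V, ∀ i : ℕ, ∀ h : i + 1 < Fintype.card V,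
      A (f ⟨i, Nat.lt_of_succ_lt h⟩) (f ⟨i + 1, h⟩) := by
  classical
  rw [← hnd.length_eq_card hall]
  exact ⟨hnd.getEquivOfForallMemList l hall, fun i h => by simpa using isChain_iff_getElem.1 hl i h⟩

theorem exists_zmodEquiv_of_cycleChain [Fintype V] {l : List V} (hnd : l.Nodup)
    (hall : ∀ v, v ∈ l) (hne : l ≠ []) (hl : Cycle.Chain A (l : Cycle V)) :
    ∃ e : ZMod (Fintype.card V) ≃ V, ∀ i, A (e i) (e (i + 1)) := by
  classical
  rw [← hnd.length_eq_card hall]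
  have : NeZero l.length := ⟨by simpa using hne⟩
  refine ⟨(ZMod.finEquiv _).symm.toEquiv.trans (hnd.getEquivOfForallMemList l hall), fun i => ?_⟩
  simpa [Fin.val_add, Nat.add_mod] using hl.rel_getElem_mod ((ZMod.finEquiv _).symm i) (by simp)

theorem exists_cycle_of_digraphStrong (hstrong : DigraphStrong A) {x y : V} (hxy : x ≠ y) :
    ∃ C : List V, C ≠ [] ∧ C.Nodup ∧ Cycle.Chain A (C : Cycle V) := by
  obtain ⟨z, hxz, -⟩ := (hstrong x y).cases_head.resolve_left hxy
  by_cases hzx : z = x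
  · subst hzx
    exact ⟨[z], by simp, nodup_singleton z, (Cycle.chain_singleton A z).2 hxz⟩
  obtain ⟨q, c, hq, hqnd, hqout, hc⟩ := (hstrong z x).exists_path_to_mem (S := {x}) hzx rfl
  rw [show c = x from hc] at hq
  exact ⟨x :: z :: q, by simp, nodup_cons.2 ⟨fun h => hqout x h rfl, hqnd⟩,
    (Cycle.chain_coe_cons _ _ _).2 (hq.cons (by simpa using hxz))⟩

namespace LocallySemicomplete

theorem swap (hls : LocallySemicomplete A) : LocallySemicomplete fun a b => A b a :=
  fun x u v huv => ⟨fun hu hv => ((hls x u v huv).2 hu hv).symm,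
    fun hu hv => ((hls x u v huv).1 hu hv).symm⟩

theorem exists_insert_or_forall_rel (hls : LocallySemicomplete A) {v : V} :
    ∀ (s : List V) (a : V) (t : List V), IsChain A (s ++ a :: t) → A a v → v ∉ t →
      (∀ x ∈ a :: t, A x v) ∨
        ∃ t₁ t₂, t = t₁ ++ t₂ ∧ t₂ ≠ [] ∧ IsChain A (s ++ a :: t₁ ++ v :: t₂) := by
  intro s a t
  induction t generalizing s a with
  | nil => intro _ hav _; left; simpa using hav
  | cons b t ih =>
    intro hch hav hv
    have hab : A a b := (isChain_cons_cons.1 (isChain_append.1 hch).2.1).1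
    rcases (hls a v b (by rintro rfl; simp at hv)).1 hav hab with hvb | hbv
    · right
      refine ⟨[], b :: t, rfl, by simp, ?_⟩
      simp_all [isChain_append]
    · rcases ih (s ++ [a]) b (by simpa using hch) hbv (fun h => hv (mem_cons_of_mem _ h))
        with hall | ⟨t₁, t₂, rfl, hne, hins⟩
      · left
        simpa [hav] using hall
      · right
        exact ⟨b :: t₁, t₂, rfl, hne, by simpa using hins⟩

theorem exists_isChain_perm_cons_of_rel (hls : LocallySemicomplete A) {l : List V} {v x : V}
    (hl : IsChain A l) (hv : v ∉ l) (hx : x ∈ l) (hxv : A x v) :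
    ∃ l' : List V, IsChain A l' ∧ l' ~ v :: l := by
  obtain ⟨s, t, rfl⟩ := append_of_mem hx
  rcases hls.exists_insert_or_forall_rel s x t hl hxv (fun h => hv (by simp [h]))
    with hall | ⟨t₁, t₂, rfl, -, hins⟩
  · refine ⟨s ++ x :: t ++ [v], isChain_append.2 ⟨hl, isChain_singleton v, ?_⟩,
      perm_append_singleton _ _⟩
    intro y hy z hz
    obtain rfl : z = v := by simpa using hz.symm
    rw [getLast?_append_of_ne_nil _ (cons_ne_nil x t)] at hy
    exact hall y (mem_of_mem_getLast? hy)
  · exact ⟨_, hins, by simpa using perm_middle (l₁ := s ++ x :: t₁) (l₂ := t₂) (a := v)⟩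

theorem exists_isChain_perm_cons (hls : LocallySemicomplete A) {l : List V} {v x : V}
    (hl : IsChain A l) (hv : v ∉ l) (hx : x ∈ l) (hxv : A x v ∨ A v x) :
    ∃ l' : List V, IsChain A l' ∧ l' ~ v :: l := by
  rcases hxv with hxv | hvx
  · exact hls.exists_isChain_perm_cons_of_rel hl hv hx hxv
  · obtain ⟨l', hl', hperm⟩ := hls.swap.exists_isChain_perm_cons_of_rel
      (isChain_reverse.2 hl) (by simpa using hv) (mem_reverse.2 hx) hvx
    exact ⟨l'.reverse, isChain_reverse.2 hl',
      (reverse_perm _).trans (hperm.trans ((reverse_perm l).cons v))⟩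

theorem exists_cycle_insert_or_forall_rel (hls : LocallySemicomplete A) {C : List V} {v x : V}
    (hC : Cycle.Chain A (C : Cycle V)) (hv : v ∉ C) (hx : x ∈ C) (hxv : A x v) :
    (∀ y ∈ C, A y v) ∨ ∃ C' : List V, Cycle.Chain A (C' : Cycle V) ∧ C' ~ v :: C := by
  obtain ⟨t, hrot⟩ := exists_cons_isRotated hx
  rw [← Cycle.coe_eq_coe.2 hrot, Cycle.chain_coe_cons] at hC
  have hvt : v ∉ t ++ [x] := fun h => hv (hrot.perm.mem_iff.1 (by simpa [or_comm] using h))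
  rcases hls.exists_insert_or_forall_rel [] x (t ++ [x]) hC hxv hvt
    with hall | ⟨t₁, t₂, ht, hne, hins⟩
  · left
    intro y hy
    have := hrot.perm.mem_iff.2 hy
    exact hall y (by simp at this ⊢; tauto)
  · right
    obtain ⟨t₂, y, rfl⟩ := (eq_nil_or_concat' t₂).resolve_left hne
    obtain ⟨rfl, hxy⟩ := append_inj' (ht.trans (append_assoc ..).symm) rfl
    obtain rfl : x = y := by simpa using hxy
    refine ⟨x :: (t₁ ++ v :: t₂), by simpa using hins, ?_⟩
    exact (perm_middle.cons x).trans ((Perm.swap v x _).trans (hrot.perm.cons v))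

theorem exists_longer_cycle (hls : LocallySemicomplete A) (hstrong : DigraphStrong A)
    {C : List V} (hnd : C.Nodup) (hC : Cycle.Chain A (C : Cycle V)) (hne : C ≠ [])
    {w : V} (hw : w ∉ C) :
    ∃ C' : List V, C'.Nodup ∧ Cycle.Chain A (C' : Cycle V) ∧ C.length < C'.length := by
  obtain ⟨x₀, hx₀⟩ := exists_mem_of_ne_nil C hne
  obtain ⟨x, hx, y, hy, hxy⟩ := (hstrong x₀ w).exists_rel_mem_notMem (S := {z | z ∈ C}) hx₀ hw
  rcases hls.exists_cycle_insert_or_forall_rel hC hy hx hxy with hdom | ⟨C', hC', hperm⟩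
  · obtain ⟨q, b, hq, hqnd, hqout, hb⟩ :=
      (hstrong y x).exists_path_to_mem (S := {z | z ∈ C}) hy hx
    obtain ⟨t, hrot⟩ := exists_cons_isRotated hb
    rw [← Cycle.coe_eq_coe.2 hrot, Cycle.chain_coe_cons] at hC
    refine ⟨b :: (t ++ y :: q), ?_, ?_, ?_⟩
    · refine nodup_append.2 ⟨hrot.perm.nodup_iff.2 hnd, hqnd, ?_⟩
      rintro z hz _ hz' rfl
      exact hqout z hz' (hrot.perm.mem_iff.1 hz)
    · rw [Cycle.chain_coe_cons]
      have hbt : IsChain A (b :: t) := (isChain_append (l₁ := b :: t) (l₂ := [b])).1 hC |>.1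
      have hjoin : ∀ z ∈ (b :: t).getLast?, ∀ y' ∈ (y :: q ++ [b]).head?, A z y' := by
        intro z hz y' hy'
        obtain rfl : y' = y := by simpa using hy'.symm
        exact hdom z (hrot.perm.mem_iff.1 (mem_of_mem_getLast? hz))
      simpa using isChain_append.2 ⟨hbt, hq, hjoin⟩
    · simp [← hrot.perm.length_eq]
  · exact ⟨C', hperm.nodup_iff.2 (nodup_cons.2 ⟨hy, hnd⟩), hC', by simp [hperm.length_eq]⟩

theorem exists_hamiltonian_path [Fintype V] (hls : LocallySemicomplete A)
    (hconn : DigraphConnected A) : ∃ l : List V, (l.Nodup ∧ IsChain A l) ∧ ∀ v, v ∈ l := by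
  refine exists_forall_mem_of_exists_longer (fun _ h => h.1) ?_ ⟨nodup_nil, .nil⟩
  rintro l ⟨hnd, hl⟩ v hv
  rcases eq_or_ne l [] with rfl | hne
  · exact ⟨[v], ⟨nodup_singleton v, isChain_singleton v⟩, by simp⟩
  obtain ⟨x₀, hx₀⟩ := exists_mem_of_ne_nil l hne
  obtain ⟨x, hx, y, hy, hxy⟩ := (hconn x₀ v).exists_rel_mem_notMem (S := {z | z ∈ l}) hx₀ hv
  obtain ⟨l', hl', hperm⟩ := hls.exists_isChain_perm_cons hl hy hx hxy
  exact ⟨l', ⟨hperm.nodup_iff.2 (nodup_cons.2 ⟨hy, hnd⟩), hl'⟩, by simp [hperm.length_eq]⟩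

theorem exists_hamiltonian_cycle [Fintype V] (hls : LocallySemicomplete A)
    (hstrong : DigraphStrong A) (hcard : 2 ≤ Fintype.card V) :
    ∃ C : List V, (C ≠ [] ∧ C.Nodup ∧ Cycle.Chain A (C : Cycle V)) ∧ ∀ v, v ∈ C := by
  obtain ⟨x, y, hxy⟩ := Fintype.exists_pair_of_one_lt_card hcard
  obtain ⟨C₀, hC₀⟩ := exists_cycle_of_digraphStrong hstrong hxy
  refine exists_forall_mem_of_exists_longer (fun _ h => h.2.1) ?_ hC₀
  rintro C ⟨hne, hnd, hC⟩ w hw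
  obtain ⟨C', hnd', hC', hlt⟩ := hls.exists_longer_cycle hstrong hnd hC hne hw
  exact ⟨C', ⟨ne_nil_of_length_pos (by omega), hnd', hC'⟩, hlt⟩

end LocallySemicomplete

end Digraph

/-- every connected locally semicomplete digraph has a Hamilton directed
path, and every strong locally semicomplete digraph on at least 2 vertices has a
Hamilton directed cycle. -/
theorem stmt17 {V : Type*} [Fintype V] (A : V → V → Prop)
    (hls : LocallySemicomplete A) :
    (DigraphConnected A → ∃ f : Fin (Fintype.card V) ≃ V,
      ∀ i : ℕ, ∀ h : i + 1 < Fintype.card V,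
        A (f ⟨i, Nat.lt_of_succ_lt h⟩) (f ⟨i + 1, h⟩)) ∧
    (DigraphStrong A → 2 ≤ Fintype.card V →
      ∃ e : ZMod (Fintype.card V) ≃ V, ∀ i, A (e i) (e (i + 1))) := by
  refine ⟨fun hconn => ?_, fun hstrong hcard => ?_⟩
  · obtain ⟨l, ⟨hnd, hl⟩, hall⟩ := hls.exists_hamiltonian_path hconn
    exact exists_finEquiv_of_isChain hnd hall hl
  · obtain ⟨C, ⟨hne, hnd, hC⟩, hall⟩ := hls.exists_hamiltonian_cycle hstrong hcard
    exact exists_zmodEquiv_of_cycleChain hnd hall hne hC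
end
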